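/- arXiv:1906.03739 — 4 statements merged into one kernel-verified Lean document; each statement's English description precedes it below -/
import Mathlib

section
/- Let $n\geq 3$ and $0<c_+<n-2$. There is no positive global $C^2$ solution $u:[0,\infty)\to(0,\infty)$ of $u''(t)=n(n-2)u(t)^{(n+2)/(n-2)}$ with $u'(0)=-c_+u(0)^{n/(n-2)}$. -/
/-!
Multiplying `u'' = a u^p` by `u'` shows that the energy `(u')² - 2a/(p+1) u^(p+1)` is conserved;
the initial condition makes it a negative constant `-K`. For `r = (1 - p)/2` the function `v = u^r`
then satisfies `v'' = -r(r-1) K u^(r-2) < 0`, so `v` is positive and concave on `[0, ∞)`, hence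
nondecreasing. Thus `u ≤ u 0`, which bounds `v''` above by a negative constant, and then `v'` and
finally `v` become negative.

In the theorem `a = n(n-2)` and `p = (n+2)/(n-2)`, so `2a/(p+1) = (n-2)²` and `c < n - 2` says
exactly that the energy is negative.
-/

open Set

section Calculus

variable {f f' f'' : ℝ → ℝ} {a : ℝ}

theorem le_add_mul_sub_of_hasDerivWithinAt_Ici_le {M t : ℝ}
    (hf : ∀ s ∈ Ici a, HasDerivWithinAt f (f' s) (Ici a) s) (hM : ∀ s ∈ Ioi a, f' s ≤ M)
    (ht : a ≤ t) : f t ≤ f a + M * (t - a) := by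
  have hg : AntitoneOn (fun s => f s - M * s) (Ici a) := by
    refine antitoneOn_of_hasDerivWithinAt_nonpos (f' := fun s => f' s - M) (convex_Ici a)
      (fun s hs => ((hf s hs).continuousWithinAt).sub (continuousWithinAt_id.const_mul M))
      (fun s hs => ?_) (fun s hs => ?_)
    · rw [interior_Ici] at hs ⊢
      simpa using ((hf s (Ioi_subset_Ici_self hs)).mono Ioi_subset_Ici_self).fun_sub
        ((hasDerivWithinAt_id s (Ioi a)).const_mul M)
    · rw [interior_Ici] at hs
      linarith [hM s hs]
  linarith [hg (mem_Ici.mpr le_rfl) ht ht]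

theorem eq_of_hasDerivWithinAt_Ici_eq_zero {t : ℝ}
    (hf : ∀ s ∈ Ici a, HasDerivWithinAt f (f' s) (Ici a) s) (h0 : ∀ s ∈ Ioi a, f' s = 0)
    (ht : a ≤ t) : f t = f a := by
  have hle := le_add_mul_sub_of_hasDerivWithinAt_Ici_le hf (fun s hs => (h0 s hs).le) ht
  have hge := le_add_mul_sub_of_hasDerivWithinAt_Ici_le (f := fun s => -f s) (M := 0)
    (fun s hs => (hf s hs).neg) (fun s hs => by simp [h0 s hs]) ht
  linarith

theorem nonneg_of_hasDerivWithinAt_Ici_of_pos_of_concave {t : ℝ}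
    (hf : ∀ s ∈ Ici a, HasDerivWithinAt f (f' s) (Ici a) s)
    (hf' : ∀ s ∈ Ici a, HasDerivWithinAt f' (f'' s) (Ici a) s)
    (hf'' : ∀ s ∈ Ioi a, f'' s ≤ 0) (hpos : ∀ s ∈ Ici a, 0 < f s) (ht : a ≤ t) :
    0 ≤ f' t := by
  by_contra! hneg
  have hsub : Ici t ⊆ Ici a := Ici_subset_Ici.mpr ht
  have hf't : ∀ s ∈ Ioi t, f' s ≤ f' t := fun s hs => by
    have := le_add_mul_sub_of_hasDerivWithinAt_Ici_le (M := 0)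
      (fun s hs => (hf' s (hsub hs)).mono hsub)
      (fun s hs => hf'' s (lt_of_le_of_lt ht hs)) (le_of_lt hs)
    linarith
  -- the tangent line at `t` reaches zero at `T`
  set T := t - f t / f' t
  have hT : t ≤ T := by
    have : f t / f' t < 0 := div_neg_of_pos_of_neg (hpos t ht) hneg
    linarith
  have hfT := le_add_mul_sub_of_hasDerivWithinAt_Ici_le
    (fun s hs => (hf s (hsub hs)).mono hsub) hf't hT
  have hzero : f t + f' t * (T - t) = 0 := by
    simp only [T]; field_simp [hneg.ne]; ring
  linarith [hpos T (hsub hT)]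

theorem not_forall_pos_of_hasDerivWithinAt_Ici_of_second_le_neg {δ : ℝ}
    (hf : ∀ s ∈ Ici a, HasDerivWithinAt f (f' s) (Ici a) s)
    (hf' : ∀ s ∈ Ici a, HasDerivWithinAt f' (f'' s) (Ici a) s)
    (hδ : 0 < δ) (hf'' : ∀ s ∈ Ioi a, f'' s ≤ -δ) : ¬ ∀ s ∈ Ici a, 0 < f s := by
  intro hpos
  have hconc : ∀ s ∈ Ioi a, f'' s ≤ 0 := fun s hs => by linarith [hf'' s hs]
  have hf'a := nonneg_of_hasDerivWithinAt_Ici_of_pos_of_concave hf hf' hconc hpos le_rfl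
  set T := a + f' a / δ + 1
  have hT : a ≤ T := by linarith [div_nonneg hf'a hδ.le]
  have hf'T := le_add_mul_sub_of_hasDerivWithinAt_Ici_le hf' hf'' hT
  have : f' a + -δ * (T - a) = -δ := by simp only [T]; field_simp; ring
  linarith [nonneg_of_hasDerivWithinAt_Ici_of_pos_of_concave hf hf' hconc hpos hT]

end Calculus

section EmdenFowler

variable {u u' u'' : ℝ → ℝ} {a p : ℝ}

theorem emdenFowler_energy_eq {t : ℝ} (hp : p + 1 ≠ 0)
    (hu : ∀ s ∈ Ici 0, HasDerivWithinAt u (u' s) (Ici 0) s)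
    (hu' : ∀ s ∈ Ici 0, HasDerivWithinAt u' (u'' s) (Ici 0) s)
    (hode : ∀ s ∈ Ioi 0, u'' s = a * u s ^ p) (hpos : ∀ s ∈ Ici 0, 0 < u s) (ht : 0 ≤ t) :
    u' t ^ 2 - 2 * a / (p + 1) * u t ^ (p + 1) = u' 0 ^ 2 - 2 * a / (p + 1) * u 0 ^ (p + 1) := by
  refine eq_of_hasDerivWithinAt_Ici_eq_zero
    (f := fun s => u' s ^ 2 - 2 * a / (p + 1) * u s ^ (p + 1))
    (f' := fun s => 2 * u' s * u'' s - 2 * a / (p + 1) * (u' s * (p + 1) * u s ^ p))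
    (fun s hs => ?_) (fun s hs => ?_) ht
  · refine (((hu' s hs).fun_pow 2).fun_sub
      (((hu s hs).rpow_const (Or.inl (hpos s hs).ne')).const_mul _)).congr_deriv ?_
    norm_num
  · simp only [hode s hs]
    field_simp
    ring

theorem emdenFowler_rpow_second_deriv_eq {x y K r : ℝ} (hx : 0 < x) (hp : p + 1 ≠ 0)
    (hy : y ^ 2 = 2 * a / (p + 1) * x ^ (p + 1) - K) (hr : r = (1 - p) / 2) :
    a * x ^ p * r * x ^ (r - 1) + y * r * (y * (r - 1) * x ^ (r - 1 - 1))
      = -(r * (r - 1) * K) * x ^ (r - 2) := by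
  have h1 : x ^ p * x ^ (r - 1) = x ^ (p + 1) * x ^ (r - 2) := by
    rw [← Real.rpow_add hx, ← Real.rpow_add hx]; ring_nf
  have h2 : y * r * (y * (r - 1) * x ^ (r - 1 - 1)) = r * (r - 1) * y ^ 2 * x ^ (r - 2) := by
    ring_nf
  rw [h2, hy, mul_assoc (a * x ^ p), mul_comm r, ← mul_assoc, mul_assoc a, h1]
  subst hr
  field_simp
  ring

theorem emdenFowler_not_forall_pos_of_energy_neg (hp : 1 < p)
    (hu : ∀ s ∈ Ici 0, HasDerivWithinAt u (u' s) (Ici 0) s)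
    (hu' : ∀ s ∈ Ici 0, HasDerivWithinAt u' (u'' s) (Ici 0) s)
    (hode : ∀ s ∈ Ioi 0, u'' s = a * u s ^ p)
    (hE : u' 0 ^ 2 < 2 * a / (p + 1) * u 0 ^ (p + 1)) : ¬ ∀ t ∈ Ici 0, 0 < u t := by
  intro hpos
  have hp1 : p + 1 ≠ 0 := by linarith
  set K := 2 * a / (p + 1) * u 0 ^ (p + 1) - u' 0 ^ 2
  have hK : 0 < K := sub_pos.mpr hE
  have henergy : ∀ t ∈ Ici 0, u' t ^ 2 = 2 * a / (p + 1) * u t ^ (p + 1) - K := fun t ht => by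
    linarith [emdenFowler_energy_eq hp1 hu hu' hode hpos ht]
  set r := (1 - p) / 2 with hr
  have hr0 : r < 0 := by linarith
  have hcoef : 0 < r * (r - 1) * K := mul_pos (mul_pos_of_neg_of_neg hr0 (by linarith)) hK
  set v'' := fun t => u'' t * r * u t ^ (r - 1) + u' t * r * (u' t * (r - 1) * u t ^ (r - 1 - 1))
  have hv : ∀ t ∈ Ici 0,
      HasDerivWithinAt (fun s => u s ^ r) (u' t * r * u t ^ (r - 1)) (Ici 0) t :=
    fun t ht => (hu t ht).rpow_const (Or.inl (hpos t ht).ne')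
  have hv' : ∀ t ∈ Ici 0,
      HasDerivWithinAt (fun s => u' s * r * u s ^ (r - 1)) (v'' t) (Ici 0) t :=
    fun t ht => ((hu' t ht).mul_const r).mul ((hu t ht).rpow_const (Or.inl (hpos t ht).ne'))
  have hv''_eq : ∀ t ∈ Ioi 0, v'' t = -(r * (r - 1) * K) * u t ^ (r - 2) := fun t ht => by
    simp only [v'', hode t ht]
    exact emdenFowler_rpow_second_deriv_eq (hpos t (Ioi_subset_Ici_self ht)) hp1
      (henergy t (Ioi_subset_Ici_self ht)) hr
  have hu'_nonpos : ∀ t ∈ Ici 0, u' t ≤ 0 := fun t ht => by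
    have hv'_nonneg := nonneg_of_hasDerivWithinAt_Ici_of_pos_of_concave hv hv'
      (fun s hs => by
        rw [hv''_eq s hs]
        nlinarith [Real.rpow_pos_of_pos (hpos s (Ioi_subset_Ici_self hs)) (r - 2)])
      (fun s hs => Real.rpow_pos_of_pos (hpos s hs) r) ht
    by_contra! hu't
    have := mul_neg_of_neg_of_pos (mul_neg_of_pos_of_neg hu't hr0)
      (Real.rpow_pos_of_pos (hpos t ht) (r - 1))
    linarith
  have hu_le : ∀ t ∈ Ici 0, u t ≤ u 0 := fun t ht => by
    linarith [le_add_mul_sub_of_hasDerivWithinAt_Ici_le hu (M := 0)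
      (fun s hs => hu'_nonpos s (Ioi_subset_Ici_self hs)) ht]
  refine not_forall_pos_of_hasDerivWithinAt_Ici_of_second_le_neg hv hv'
    (δ := r * (r - 1) * K * u 0 ^ (r - 2))
    (mul_pos hcoef (Real.rpow_pos_of_pos (hpos 0 self_mem_Ici) _)) (fun t ht => ?_)
    (fun t ht => Real.rpow_pos_of_pos (hpos t ht) r)
  rw [hv''_eq t ht, neg_mul, neg_le_neg_iff]
  refine mul_le_mul_of_nonneg_left ?_ hcoef.le
  exact Real.rpow_le_rpow_of_nonpos (hpos t (Ioi_subset_Ici_self ht))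
    (hu_le t (Ioi_subset_Ici_self ht)) (by linarith)

end EmdenFowler

theorem stmt5 (n : ℕ) (hn : 3 ≤ n) (c : ℝ) (hc0 : 0 < c) (hc : c < (n : ℝ) - 2) :
    ¬ ∃ u : ℝ → ℝ,
      ContDiffOn ℝ 2 u (Ici 0) ∧
      (∀ t ∈ Ici (0 : ℝ), 0 < u t) ∧
      (∀ t : ℝ, 0 < t →
        derivWithin (derivWithin u (Ici 0)) (Ici 0) t
          = n * ((n : ℝ) - 2) * u t ^ (((n : ℝ) + 2) / ((n : ℝ) - 2))) ∧
      derivWithin u (Ici 0) 0 = -c * u 0 ^ ((n : ℝ) / ((n : ℝ) - 2)) := by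
  rintro ⟨u, hu, hpos, hode, hinit⟩
  have hn2 : (0 : ℝ) < n - 2 := by
    have : (3 : ℝ) ≤ n := by exact_mod_cast hn
    linarith
  have hu' : ContDiffOn ℝ 1 (derivWithin u (Ici 0)) (Ici 0) :=
    hu.derivWithin (uniqueDiffOn_Ici 0) (by norm_num)
  refine emdenFowler_not_forall_pos_of_energy_neg (a := n * ((n : ℝ) - 2))
    (p := ((n : ℝ) + 2) / ((n : ℝ) - 2)) ?_
    (fun t ht => (hu.differentiableOn (by norm_num) t ht).hasDerivWithinAt)
    (fun t ht => (hu'.differentiableOn (by norm_num) t ht).hasDerivWithinAt)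
    hode ?_ hpos
  · rw [lt_div_iff₀ hn2]; linarith
  · have hp1 : ((n : ℝ) + 2) / ((n : ℝ) - 2) + 1 = 2 * ((n : ℝ) / ((n : ℝ) - 2)) := by
      field_simp; ring
    have hcoef :
        2 * (n * ((n : ℝ) - 2)) / (2 * ((n : ℝ) / ((n : ℝ) - 2))) = ((n : ℝ) - 2) ^ 2 := by
      have : (n : ℝ) ≠ 0 := by linarith
      field_simp
    have hu0 := hpos 0 self_mem_Ici
    rw [hinit, hp1, hcoef, two_mul, Real.rpow_add hu0]
    have hc2 : c ^ 2 < ((n : ℝ) - 2) ^ 2 := by gcongr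
    have hX := pow_pos (Real.rpow_pos_of_pos hu0 ((n : ℝ) / ((n : ℝ) - 2))) 2
    linear_combination mul_lt_mul_of_pos_right hc2 hX
end

section
/- Let $n\geq 3$, $\tau>0$, $\alpha>0$, $p>1$, $q\geq 1$, and let $v\in C^2(H)\cap C^1(\bar H\setminus\{0\})$ be positive and satisfy $\Delta v=|x|^{\tau}v^p$ in $H$ and $\partial v/\partial t=-|x|^{-\alpha}v^q$ on $\partial H\setminus\{0\}$. Then for any $\epsilon$ with $0<\epsilon<\min\{1,\min_{\partial B_1^+\cap\partial B_1}v\}$, one has $v(x)\geq\epsilon/2$ for all $x\in\overline{B_1^+}\setminus\{0\}$, where $B_1^+=\{x\in H:|x|<1\}$. -/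
noncomputable section

/-- Laplacian (in all `m+1` variables) of a function on the half-space written in
coordinates `(x', t)` with `x' : ℝ^m` and `t : ℝ`. -/
noncomputable def lapH {m : ℕ} (u : EuclideanSpace ℝ (Fin m) → ℝ → ℝ)
    (x : EuclideanSpace ℝ (Fin m)) (t : ℝ) : ℝ :=
  (∑ i : Fin m, deriv (deriv (fun s : ℝ => u (x + s • EuclideanSpace.single i (1 : ℝ)) t)) 0)
    + deriv (deriv (fun s : ℝ => u x s)) t

/-!
Fix `0 < ρ ≤ |X|²` and take the comparison function `φ = ε/2 - ε (ρ/|X|²)^{(n-2)/2} + ε t²/2`: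
it satisfies `Δφ = ε`, it is `< ε` on the closed half ball and `≤ 0` on the sphere `|X|² = ρ`.
Let `v - φ` attain its minimum over the half annulus `ρ ≤ |X|² ≤ 1, t ≥ 0` at a point where it is
negative. That point cannot lie on the outer sphere (there `v > ε`) or on the inner one (there
`v > 0`), nor on the flat boundary (there `∂ₜv < 0 = ∂ₜφ`), nor inside, where the minimum forces
`Δv ≥ Δφ = ε` while `Δv = |X|^τ v^p ≤ v < ε`. Hence `v ≥ φ`, and `ρ → 0` gives `v ≥ ε/2 + ε t²/2`.
-/

open Filter Set Topology

theorem IsLocalMin.deriv_deriv_nonneg {f : ℝ → ℝ} {a : ℝ} (h : IsLocalMin f a)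
    (hc : ContinuousAt f a) : 0 ≤ deriv (deriv f) a := by
  by_contra! hneg
  -- otherwise the second derivative test makes `a` a local maximum too, so `f` is locally constant
  have hconst : f =ᶠ[𝓝 a] fun _ ↦ f a :=
    (h.and (isLocalMax_of_deriv_deriv_neg hneg h.deriv_eq_zero hc)).mono
      fun _ hs ↦ le_antisymm hs.2 hs.1
  have : deriv (deriv f) a = 0 := by
    rw [hconst.deriv.deriv_eq]
    simp
  exact hneg.ne this

theorem deriv_deriv_le_of_isLocalMin_sub {f g : ℝ → ℝ} {a : ℝ} (hf : ContDiffAt ℝ 2 f a)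
    (hg : ContDiffAt ℝ 2 g a) (h : IsLocalMin (fun s ↦ f s - g s) a) :
    deriv (deriv g) a ≤ deriv (deriv f) a := by
  have hsub := iteratedDeriv_fun_sub hf hg
  simp only [iteratedDeriv_succ, iteratedDeriv_zero] at hsub
  linarith [h.deriv_deriv_nonneg (hf.continuousAt.sub hg.continuousAt)]

theorem IsLocalMinOn.hasDerivAt_nonneg_of_Ici {f : ℝ → ℝ} {a f' : ℝ}
    (h : IsLocalMinOn f (Ici a) a) (hf : HasDerivAt f f' a) : 0 ≤ f' := by
  have hcone : (1 : ℝ) ∈ posTangentConeAt (Ici a) a :=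
    mem_posTangentConeAt_of_segment_subset (by
      rw [segment_eq_Icc (by linarith)]; exact Icc_subset_Ici_self)
  simpa using h.hasFDerivWithinAt_nonneg hf.hasFDerivAt.hasFDerivWithinAt hcone

theorem rpow_mul_rpow_le_self {a b σ p : ℝ} (ha : 0 ≤ a) (ha1 : a ≤ 1) (hσ : 0 ≤ σ) (hb : 0 < b)
    (hb1 : b ≤ 1) (hp : 1 ≤ p) : a ^ σ * b ^ p ≤ b :=
  calc a ^ σ * b ^ p ≤ 1 * b ^ (1 : ℝ) :=
        mul_le_mul (Real.rpow_le_one ha ha1 hσ) (Real.rpow_le_rpow_of_exponent_ge hb hb1 hp)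
          (by positivity) zero_le_one
    _ = b := by simp

theorem deriv_deriv_eq_of_hasDerivAt {f f' : ℝ → ℝ} {a f'' : ℝ}
    (h : ∀ᶠ s in 𝓝 a, HasDerivAt f (f' s) s) (h' : HasDerivAt f' f'' a) :
    deriv (deriv f) a = f'' := by
  have : deriv f =ᶠ[𝓝 a] f' := h.mono fun _ hs ↦ hs.deriv
  rw [this.deriv_eq, h'.deriv]

theorem deriv_deriv_rpow_quadratic (A B c s : ℝ) (hs : 0 < A + B * s + s ^ 2) :
    deriv (deriv fun s ↦ (A + B * s + s ^ 2) ^ c) s =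
      c * (A + B * s + s ^ 2) ^ (c - 2) *
        ((c - 1) * (B + 2 * s) ^ 2 + 2 * (A + B * s + s ^ 2)) := by
  set q : ℝ → ℝ := fun s ↦ A + B * s + s ^ 2
  have hq : ∀ s, HasDerivAt q (B + 2 * s) s := fun s ↦
    ((((hasDerivAt_id s).const_mul B).const_add A).fun_add (hasDerivAt_pow 2 s)).congr_deriv
      (by simp)
  have hpos : ∀ᶠ s in 𝓝 s, 0 < q s :=
    (hq s).continuousAt.eventually (lt_mem_nhds hs)
  refine deriv_deriv_eq_of_hasDerivAt (f' := fun s ↦ (B + 2 * s) * (c * q s ^ (c - 1)))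
    (hpos.mono fun s hs ↦ ((hq s).rpow_const (Or.inl hs.ne')).congr_deriv (by ring)) ?_
  have hB : HasDerivAt (fun s ↦ B + 2 * s) 2 s := by
    simpa using ((hasDerivAt_id s).const_mul 2).const_add B
  refine (hB.mul (((hq s).rpow_const (p := c - 1) (Or.inl hs.ne')).const_mul c)).congr_deriv ?_
  have : q s ^ (c - 1) = q s ^ (c - 2) * q s := by
    rw [show c - 1 = (c - 2) + 1 by ring, Real.rpow_add_one hs.ne']
  rw [this, show c - 1 - 1 = c - 2 by ring]
  ring

section Laplacian

variable {m : ℕ}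

theorem norm_add_smul_single_sq (x : EuclideanSpace ℝ (Fin m)) (i : Fin m) (s : ℝ) :
    ‖x + s • EuclideanSpace.single i (1 : ℝ)‖ ^ 2 = ‖x‖ ^ 2 + 2 * x i * s + s ^ 2 := by
  rw [norm_add_sq_real, real_inner_smul_right, EuclideanSpace.inner_single_right, norm_smul,
    PiLp.norm_single]
  simp only [Real.ringHom_apply, one_mul, Real.norm_eq_abs, norm_one, mul_one, sq_abs]
  ring

theorem lapH_le_lapH_of_isLocalMin_sub {u w : EuclideanSpace ℝ (Fin m) → ℝ → ℝ}
    {x : EuclideanSpace ℝ (Fin m)} {t : ℝ}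
    (hu : ContDiffAt ℝ 2 (Function.uncurry u) (x, t))
    (hw : ContDiffAt ℝ 2 (Function.uncurry w) (x, t))
    (hmin : IsLocalMin (fun z ↦ w z.1 z.2 - u z.1 z.2) (x, t)) :
    lapH u x t ≤ lapH w x t := by
  have along : ∀ (ℓ : ℝ → EuclideanSpace ℝ (Fin m) × ℝ) (a : ℝ), ContDiff ℝ 2 ℓ → ℓ a = (x, t) →
      deriv (deriv fun s ↦ u (ℓ s).1 (ℓ s).2) a ≤ deriv (deriv fun s ↦ w (ℓ s).1 (ℓ s).2) a := by
    intro ℓ a hℓ ha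
    rw [← ha] at hu hw hmin
    exact deriv_deriv_le_of_isLocalMin_sub (hw.comp a hℓ.contDiffAt) (hu.comp a hℓ.contDiffAt)
      (hmin.comp_continuous hℓ.continuous.continuousAt)
  unfold lapH
  gcongr with i
  · exact along (fun s ↦ (x + s • EuclideanSpace.single i (1 : ℝ), t)) 0 (by fun_prop) (by simp)
  · exact along (fun s ↦ (x, s)) t (by fun_prop) rfl

theorem lapH_rpow_normSq (c : ℝ) {x : EuclideanSpace ℝ (Fin m)} {t : ℝ}
    (h : 0 < ‖x‖ ^ 2 + t ^ 2) :
    lapH (fun x t ↦ (‖x‖ ^ 2 + t ^ 2) ^ c) x t =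
      2 * c * (2 * c + m - 1) * (‖x‖ ^ 2 + t ^ 2) ^ (c - 1) := by
  set q := ‖x‖ ^ 2 + t ^ 2
  have hline : ∀ i : Fin m, deriv (deriv fun s : ℝ ↦
      (‖x + s • EuclideanSpace.single i (1 : ℝ)‖ ^ 2 + t ^ 2) ^ c) 0 =
        c * q ^ (c - 2) * ((c - 1) * (2 * x i) ^ 2 + 2 * q) := by
    intro i
    simp_rw [norm_add_smul_single_sq, show ∀ s : ℝ, ‖x‖ ^ 2 + 2 * x i * s + s ^ 2 + t ^ 2 =
      q + 2 * x i * s + s ^ 2 from fun s ↦ by ring]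
    rw [deriv_deriv_rpow_quadratic _ _ _ _ (by simpa using h)]
    simp
  have htline : deriv (deriv fun s ↦ (‖x‖ ^ 2 + s ^ 2) ^ c) t =
      c * q ^ (c - 2) * ((c - 1) * (2 * t) ^ 2 + 2 * q) := by
    simpa using deriv_deriv_rpow_quadratic (‖x‖ ^ 2) 0 c t (by simpa using h)
  have hq : q ^ (c - 1) = q ^ (c - 2) * q := by
    rw [show c - 1 = (c - 2) + 1 by ring, Real.rpow_add_one h.ne']
  simp only [lapH, hline, htline, ← Finset.mul_sum, Finset.sum_add_distrib, mul_pow,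
    ← EuclideanSpace.real_norm_sq_eq, Finset.sum_const, Finset.card_univ, Fintype.card_fin,
    nsmul_eq_mul]
  rw [hq]
  ring

theorem lapH_const_sub_mul_add_mul_sq (K η μ : ℝ) {u : EuclideanSpace ℝ (Fin m) → ℝ → ℝ}
    {x : EuclideanSpace ℝ (Fin m)} {t : ℝ} (hu : ContDiffAt ℝ 2 (u x) t) :
    lapH (fun x t ↦ K - η * u x t + μ * t ^ 2) x t = -(η * lapH u x t) + 2 * μ := by
  have hline : ∀ (f : ℝ → ℝ) (C : ℝ), deriv (deriv fun s ↦ K - η * f s + C) =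
      fun s ↦ -(η * deriv (deriv f) s) := fun f C ↦ by
    simp [deriv_const_mul_field']
  have htline : deriv (deriv fun s ↦ K - η * u x s + μ * s ^ 2) t =
      -(η * deriv (deriv (u x)) t) + 2 * μ := by
    have hsum := iteratedDeriv_fun_add (n := 2) (f := fun s ↦ K - η * u x s) (by fun_prop)
      (by fun_prop : ContDiffAt ℝ 2 (fun s : ℝ ↦ μ * s ^ 2) t)
    simp only [iteratedDeriv_succ, iteratedDeriv_zero] at hsum
    rw [hsum]
    simp [deriv_const_mul_field', mul_comm]
  simp only [lapH, hline, htline, Finset.sum_neg_distrib, ← Finset.mul_sum]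
  ring

end Laplacian

section Comparison

variable {m : ℕ}

/-- The paper's comparison function `ε/2 - r^{n-2} ε |X|^{2-n} + ε t²/2`, written with `ρ = r²`
and `m = n - 1`. -/
def comparisonFn (m : ℕ) (ε ρ : ℝ) (x : EuclideanSpace ℝ (Fin m)) (t : ℝ) : ℝ :=
  ε / 2 - ε * ρ ^ (((m : ℝ) - 1) / 2) * (‖x‖ ^ 2 + t ^ 2) ^ (-(((m : ℝ) - 1) / 2))
    + ε / 2 * t ^ 2

theorem lapH_comparisonFn (ε ρ : ℝ) {x : EuclideanSpace ℝ (Fin m)} {t : ℝ}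
    (h : 0 < ‖x‖ ^ 2 + t ^ 2) : lapH (comparisonFn m ε ρ) x t = ε := by
  have hu : ContDiffAt ℝ 2 (fun s ↦ (‖x‖ ^ 2 + s ^ 2) ^ (-(((m : ℝ) - 1) / 2))) t :=
    (by fun_prop : ContDiffAt ℝ 2 (fun s : ℝ ↦ ‖x‖ ^ 2 + s ^ 2) t).rpow_const_of_ne h.ne'
  unfold comparisonFn
  rw [lapH_const_sub_mul_add_mul_sq _ _ _
    (u := fun x t ↦ (‖x‖ ^ 2 + t ^ 2) ^ (-(((m : ℝ) - 1) / 2))) hu, lapH_rpow_normSq _ h]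
  ring

theorem contDiffAt_comparisonFn (ε ρ : ℝ) {x : EuclideanSpace ℝ (Fin m)} {t : ℝ}
    (h : 0 < ‖x‖ ^ 2 + t ^ 2) :
    ContDiffAt ℝ 2 (Function.uncurry (comparisonFn m ε ρ)) (x, t) := by
  have hq : ContDiffAt ℝ 2 (fun z : EuclideanSpace ℝ (Fin m) × ℝ ↦ ‖z.1‖ ^ 2 + z.2 ^ 2) (x, t) :=
    (((contDiff_norm_sq ℝ).comp contDiff_fst).add (contDiff_snd.pow 2)).contDiffAt
  have := hq.rpow_const_of_ne (p := -(((m : ℝ) - 1) / 2)) h.ne'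
  unfold Function.uncurry comparisonFn
  fun_prop

theorem comparisonFn_lt {ε ρ : ℝ} (hε : 0 < ε) (hρ : 0 < ρ) {x : EuclideanSpace ℝ (Fin m)} {t : ℝ}
    (h : 0 < ‖x‖ ^ 2 + t ^ 2) (h1 : ‖x‖ ^ 2 + t ^ 2 ≤ 1) : comparisonFn m ε ρ x t < ε := by
  have : 0 < ε * ρ ^ (((m : ℝ) - 1) / 2) * (‖x‖ ^ 2 + t ^ 2) ^ (-(((m : ℝ) - 1) / 2)) := by
    positivity
  have : t ^ 2 ≤ 1 := by nlinarith [sq_nonneg ‖x‖]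
  rw [comparisonFn]
  nlinarith

theorem comparisonFn_nonpos {ε ρ : ℝ} (hε : 0 ≤ ε) (hρ : 0 < ρ) {x : EuclideanSpace ℝ (Fin m)}
    {t : ℝ} (h : ‖x‖ ^ 2 + t ^ 2 = ρ) (h1 : ‖x‖ ^ 2 + t ^ 2 ≤ 1) : comparisonFn m ε ρ x t ≤ 0 := by
  have : t ^ 2 ≤ 1 := by nlinarith [sq_nonneg ‖x‖]
  rw [comparisonFn, h, mul_assoc, ← Real.rpow_add hρ, add_neg_cancel, Real.rpow_zero]
  nlinarith

theorem hasDerivAt_comparisonFn_zero (ε ρ : ℝ) {x : EuclideanSpace ℝ (Fin m)} (hx : x ≠ 0) :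
    HasDerivAt (comparisonFn m ε ρ x) 0 0 := by
  have hq : HasDerivAt (fun s : ℝ ↦ ‖x‖ ^ 2 + s ^ 2) 0 0 := by
    simpa using (hasDerivAt_pow 2 (0 : ℝ)).const_add (‖x‖ ^ 2)
  have := ((hq.rpow_const (p := -(((m : ℝ) - 1) / 2)) (Or.inl (by positivity))).const_mul
    (ε * ρ ^ (((m : ℝ) - 1) / 2))).const_sub (ε / 2) |>.fun_add
    ((hasDerivAt_pow 2 (0 : ℝ)).const_mul (ε / 2))
  exact this.congr_deriv (by simp)

theorem tendsto_comparisonFn (ε : ℝ) (hm : 1 < m) (x : EuclideanSpace ℝ (Fin m)) (t : ℝ) :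
    Tendsto (fun ρ ↦ comparisonFn m ε ρ x t) (𝓝 0) (𝓝 (ε / 2 + ε / 2 * t ^ 2)) := by
  have hk : 0 < ((m : ℝ) - 1) / 2 := by
    have : (1 : ℝ) < m := by exact_mod_cast hm
    linarith
  have := ((Real.continuousAt_rpow_const 0 _ (Or.inr hk.le)).tendsto.const_mul ε).mul_const
    ((‖x‖ ^ 2 + t ^ 2) ^ (-(((m : ℝ) - 1) / 2)))
  rw [Real.zero_rpow hk.ne', mul_zero, zero_mul] at this
  have := (this.const_sub (ε / 2)).add_const (ε / 2 * t ^ 2)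
  rwa [sub_zero] at this

def halfAnnulus (m : ℕ) (ρ : ℝ) : Set (EuclideanSpace ℝ (Fin m) × ℝ) :=
  {z | 0 ≤ z.2 ∧ ρ ≤ ‖z.1‖ ^ 2 + z.2 ^ 2 ∧ ‖z.1‖ ^ 2 + z.2 ^ 2 ≤ 1}

theorem isCompact_halfAnnulus (m : ℕ) (ρ : ℝ) : IsCompact (halfAnnulus m ρ) := by
  have hq : Continuous fun z : EuclideanSpace ℝ (Fin m) × ℝ ↦ ‖z.1‖ ^ 2 + z.2 ^ 2 := by fun_prop
  have hclosed : IsClosed (halfAnnulus m ρ) :=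
    (isClosed_le continuous_const continuous_snd).inter
      ((isClosed_le continuous_const hq).inter (isClosed_le hq continuous_const))
  refine (isCompact_closedBall 0 1).of_isClosed_subset hclosed fun z ⟨_, _, hz⟩ ↦ ?_
  rw [mem_closedBall_zero_iff, norm_prod_le_iff, Real.norm_eq_abs, abs_le]
  refine ⟨?_, ?_, ?_⟩ <;> nlinarith [hz, norm_nonneg z.1, sq_nonneg z.2, sq_nonneg ‖z.1‖]

theorem halfAnnulus_mem_nhdsWithin {ρ : ℝ} {z : EuclideanSpace ℝ (Fin m) × ℝ}
    (hρ : ρ < ‖z.1‖ ^ 2 + z.2 ^ 2) (h1 : ‖z.1‖ ^ 2 + z.2 ^ 2 < 1) :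
    halfAnnulus m ρ ∈ 𝓝[{z | 0 ≤ z.2}] z := by
  have hq : Continuous fun z : EuclideanSpace ℝ (Fin m) × ℝ ↦ ‖z.1‖ ^ 2 + z.2 ^ 2 := by fun_prop
  exact inter_mem_nhdsWithin _ (hq.continuousAt.preimage_mem_nhds (Icc_mem_nhds hρ h1))

theorem comparisonFn_le_of_isLocalMinOn {v : EuclideanSpace ℝ (Fin m) → ℝ → ℝ} {ε ρ : ℝ}
    (hε : 0 < ε) (hρ : 0 < ρ) (hv2 : ContDiffOn ℝ 2 (Function.uncurry v) {z | 0 < z.2})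
    (hlap : ∀ x t, 0 < t → ‖x‖ ^ 2 + t ^ 2 < 1 → v x t < ε → lapH v x t < ε)
    (hbc : ∀ x, x ≠ 0 → deriv (v x) 0 < 0) {x : EuclideanSpace ℝ (Fin m)} {t : ℝ}
    (ht : 0 ≤ t) (hρq : ρ < ‖x‖ ^ 2 + t ^ 2) (hq1 : ‖x‖ ^ 2 + t ^ 2 < 1)
    (hmin : IsLocalMinOn (fun z ↦ v z.1 z.2 - comparisonFn m ε ρ z.1 z.2) {z | 0 ≤ z.2} (x, t)) :
    comparisonFn m ε ρ x t ≤ v x t := by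
  by_contra! hlt
  have hq0 : 0 < ‖x‖ ^ 2 + t ^ 2 := hρ.trans hρq
  have hvε : v x t < ε := hlt.trans (comparisonFn_lt hε hρ hq0 hq1.le)
  rcases ht.eq_or_lt with rfl | ht
  · have hx : x ≠ 0 := by rintro rfl; simp at hq0
    have hv : HasDerivAt (v x) (deriv (v x) 0) 0 :=
      (differentiableAt_of_deriv_ne_zero (hbc x hx).ne).hasDerivAt
    have := (hmin.comp_continuousOn (g := fun s ↦ (x, s)) (s := Ici 0) (fun _ hs ↦ hs)
      (by fun_prop) self_mem_Ici).hasDerivAt_nonneg_of_Ici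
      (hv.sub (hasDerivAt_comparisonFn_zero ε ρ hx))
    linarith [hbc x hx]
  · have hnhds : {z : EuclideanSpace ℝ (Fin m) × ℝ | 0 < z.2} ∈ 𝓝 (x, t) :=
      (isOpen_lt continuous_const continuous_snd).mem_nhds ht
    have := lapH_le_lapH_of_isLocalMin_sub (contDiffAt_comparisonFn ε ρ hq0)
      (hv2.contDiffAt hnhds) (hmin.isLocalMin (mem_of_superset hnhds fun z (h : 0 < z.2) ↦ h.le))
    rw [lapH_comparisonFn ε ρ hq0] at this
    linarith [hlap x t ht hq1 hvε]

theorem comparisonFn_le_of_mem_halfAnnulus {v : EuclideanSpace ℝ (Fin m) → ℝ → ℝ} {ε ρ : ℝ}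
    (hε : 0 < ε) (hρ : 0 < ρ) (hv2 : ContDiffOn ℝ 2 (Function.uncurry v) {z | 0 < z.2})
    (hv : ContinuousOn (Function.uncurry v) ({z | 0 ≤ z.2} \ {0}))
    (hpos : ∀ x t, 0 ≤ t → ‖x‖ ^ 2 + t ^ 2 ≠ 0 → 0 < v x t)
    (hlap : ∀ x t, 0 < t → ‖x‖ ^ 2 + t ^ 2 < 1 → v x t < ε → lapH v x t < ε)
    (hbc : ∀ x, x ≠ 0 → deriv (v x) 0 < 0)
    (hbd : ∀ x t, 0 ≤ t → ‖x‖ ^ 2 + t ^ 2 = 1 → ε ≤ v x t)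
    {z : EuclideanSpace ℝ (Fin m) × ℝ} (hz : z ∈ halfAnnulus m ρ) :
    comparisonFn m ε ρ z.1 z.2 ≤ v z.1 z.2 := by
  have hq0 : ∀ z ∈ halfAnnulus m ρ, 0 < ‖z.1‖ ^ 2 + z.2 ^ 2 := fun z hz ↦ hρ.trans_le hz.2.1
  have hw : ContinuousOn (fun z ↦ v z.1 z.2 - comparisonFn m ε ρ z.1 z.2) (halfAnnulus m ρ) := by
    refine hv.mono (fun z hz ↦ ⟨hz.1, ?_⟩) |>.sub (continuousOn_of_forall_continuousAt
      fun z hz ↦ (contDiffAt_comparisonFn ε ρ (hq0 z hz)).continuousAt)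
    rintro rfl
    simpa using hq0 _ hz
  obtain ⟨⟨x, t⟩, hmem, hmin⟩ := (isCompact_halfAnnulus m ρ).exists_isMinOn ⟨z, hz⟩ hw
  have hzmin := isMinOn_iff.mp hmin z hz
  dsimp only at hzmin
  suffices comparisonFn m ε ρ x t ≤ v x t by linarith
  obtain ⟨ht, hρq, hq1⟩ := hmem
  by_contra! hlt
  have hq1' : ‖x‖ ^ 2 + t ^ 2 < 1 := hq1.lt_of_ne fun h ↦ by
    linarith [hbd x t ht h, comparisonFn_lt hε hρ (hq0 _ ⟨ht, hρq, hq1⟩) hq1]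
  have hρq' : ρ < ‖x‖ ^ 2 + t ^ 2 := hρq.lt_of_ne fun h ↦ by
    linarith [comparisonFn_nonpos hε.le hρ h.symm hq1, hpos x t ht (h ▸ hρ.ne')]
  exact hlt.not_ge (comparisonFn_le_of_isLocalMinOn hε hρ hv2 hlap hbc ht hρq' hq1'
    (mem_of_superset (halfAnnulus_mem_nhdsWithin hρq' hq1') hmin))

end Comparison

theorem stmt8_general (n : ℕ) (hn : 3 ≤ n) (τ α p q : ℝ)
    (hτ : 0 < τ) (hp : 1 < p)
    (v : EuclideanSpace ℝ (Fin (n - 1)) → ℝ → ℝ)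
    (hv2 : ContDiffOn ℝ 2 (fun z : EuclideanSpace ℝ (Fin (n - 1)) × ℝ => v z.1 z.2)
      {z : EuclideanSpace ℝ (Fin (n - 1)) × ℝ | 0 < z.2})
    (hv1 : ContDiffOn ℝ 1 (fun z : EuclideanSpace ℝ (Fin (n - 1)) × ℝ => v z.1 z.2)
      ({z : EuclideanSpace ℝ (Fin (n - 1)) × ℝ | 0 ≤ z.2} \ {0}))
    (hpos : ∀ (x' : EuclideanSpace ℝ (Fin (n - 1))) (t : ℝ), 0 ≤ t →
      ‖x'‖ ^ 2 + t ^ 2 ≠ 0 → 0 < v x' t)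
    (heq : ∀ (x' : EuclideanSpace ℝ (Fin (n - 1))) (t : ℝ), 0 < t →
      lapH v x' t = (‖x'‖ ^ 2 + t ^ 2) ^ (τ / 2) * v x' t ^ p)
    (hbc : ∀ x' : EuclideanSpace ℝ (Fin (n - 1)), x' ≠ 0 →
      deriv (fun t => v x' t) 0 = -((‖x'‖ ^ 2) ^ (-(α / 2)) * v x' 0 ^ q)) :
    ∀ ε : ℝ, 0 < ε → ε < 1 →
      (∀ (x' : EuclideanSpace ℝ (Fin (n - 1))) (t : ℝ), 0 ≤ t →
        ‖x'‖ ^ 2 + t ^ 2 = 1 → ε < v x' t) →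
      ∀ (x' : EuclideanSpace ℝ (Fin (n - 1))) (t : ℝ), 0 ≤ t →
        ‖x'‖ ^ 2 + t ^ 2 ≤ 1 → ‖x'‖ ^ 2 + t ^ 2 ≠ 0 →
        ε / 2 ≤ v x' t := by
  intro ε hε hε1 hbd x t ht hq1 hq0
  have hlap : ∀ x t, 0 < t → ‖x‖ ^ 2 + t ^ 2 < 1 → v x t < ε → lapH v x t < ε :=
    fun x t ht hq hvε ↦ by
      rw [heq x t ht]
      exact (rpow_mul_rpow_le_self (by positivity) hq.le (by positivity)
        (hpos x t ht.le (by positivity)) (hvε.trans hε1).le hp.le).trans_lt hvε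
  have hflux : ∀ x, x ≠ 0 → deriv (v x) 0 < 0 := fun x hx ↦ by
    have hx2 : 0 < ‖x‖ ^ 2 := by positivity
    have hv0 := hpos x 0 le_rfl (by simpa using hx2.ne')
    rw [hbc x hx, neg_lt_zero]
    positivity
  have hle : ∀ᶠ ρ in 𝓝[>] 0, comparisonFn (n - 1) ε ρ x t ≤ v x t := by
    filter_upwards [Ioc_mem_nhdsGT (lt_of_le_of_ne (by positivity) hq0.symm)] with ρ hρ
    exact comparisonFn_le_of_mem_halfAnnulus (z := (x, t)) hε hρ.1 hv2 hv1.continuousOn hpos hlap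
      hflux (fun x t ht h ↦ (hbd x t ht h).le) ⟨ht, hρ.2, hq1⟩
  have := le_of_tendsto ((tendsto_comparisonFn ε (by omega) x t).mono_left nhdsWithin_le_nhds) hle
  nlinarith [sq_nonneg t]

theorem stmt8 (n : ℕ) (hn : 3 ≤ n) (τ α p q : ℝ)
    (hτ : 0 < τ) (hα : 0 < α) (hp : 1 < p) (hq : 1 ≤ q)
    (v : EuclideanSpace ℝ (Fin (n - 1)) → ℝ → ℝ)
    (hv2 : ContDiffOn ℝ 2 (fun z : EuclideanSpace ℝ (Fin (n - 1)) × ℝ => v z.1 z.2)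
      {z : EuclideanSpace ℝ (Fin (n - 1)) × ℝ | 0 < z.2})
    (hv1 : ContDiffOn ℝ 1 (fun z : EuclideanSpace ℝ (Fin (n - 1)) × ℝ => v z.1 z.2)
      ({z : EuclideanSpace ℝ (Fin (n - 1)) × ℝ | 0 ≤ z.2} \ {0}))
    (hpos : ∀ (x' : EuclideanSpace ℝ (Fin (n - 1))) (t : ℝ), 0 ≤ t →
      ‖x'‖ ^ 2 + t ^ 2 ≠ 0 → 0 < v x' t)
    (heq : ∀ (x' : EuclideanSpace ℝ (Fin (n - 1))) (t : ℝ), 0 < t →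
      lapH v x' t = (‖x'‖ ^ 2 + t ^ 2) ^ (τ / 2) * v x' t ^ p)
    (hbc : ∀ x' : EuclideanSpace ℝ (Fin (n - 1)), x' ≠ 0 →
      deriv (fun t => v x' t) 0 = -((‖x'‖ ^ 2) ^ (-(α / 2)) * v x' 0 ^ q)) :
    ∀ ε : ℝ, 0 < ε → ε < 1 →
      (∀ (x' : EuclideanSpace ℝ (Fin (n - 1))) (t : ℝ), 0 ≤ t →
        ‖x'‖ ^ 2 + t ^ 2 = 1 → ε < v x' t) →
      ∀ (x' : EuclideanSpace ℝ (Fin (n - 1))) (t : ℝ), 0 ≤ t →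
        ‖x'‖ ^ 2 + t ^ 2 ≤ 1 → ‖x'‖ ^ 2 + t ^ 2 ≠ 0 →
        ε / 2 ≤ v x' t :=
  stmt8_general n hn τ α p q hτ hp v hv2 hv1 hpos heq hbc
end
end

section
/- Let $n\geq 3$ and suppose $f\in C^1(\bar H)$ satisfies: for every $b\in\partial H=\mathbb{R}^{n-1}$ and every $\lambda>0$, $f(x'+b,t)-\frac{\lambda^{n-2}}{|x|^{n-2}}f\big(\frac{\lambda^2 x'}{|x|^2}+b,\frac{\lambda^2 t}{|x|^2}\big)\geq 0$ for all $x=(x',t)\in H$ with $|x|<\lambda$. Then $f(x',t)=f(0,t)$ for all $(x',t)\in H$, i.e., $f$ depends only on the last variable. -/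
noncomputable section

/-!
Given `x'`, `y'`, `t > 0` and `s > 1`, put `v = (s - 1)⁻¹ • (x' - y')` and use the half ball
centred at `b = y' - v` of radius `λ` with `λ² = s (‖v‖² + t²)`. Its Kelvin reflection sends
`(y', t)` to `(x', s t)` with factor `s^((n-2)/2)`, so `s^((n-2)/2) f(x', s t) ≤ f(y', t)`.
Letting `s → 1⁺` gives `f(x', t) ≤ f(y', t)` by continuity, and symmetry gives equality.
-/

open Filter Topology

def KelvinDominates {E : Type*} [NormedAddCommGroup E] [NormedSpace ℝ E] (n : ℕ)
    (f : E → ℝ → ℝ) : Prop :=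
  ∀ (b : E) (lam : ℝ), 0 < lam → ∀ (x' : E) (t : ℝ), 0 < t → ‖x'‖ ^ 2 + t ^ 2 < lam ^ 2 →
    f (x' + b) t
      - lam ^ (n - 2) / ((‖x'‖ ^ 2 + t ^ 2) ^ (((n : ℝ) - 2) / 2))
        * f ((lam ^ 2 / (‖x'‖ ^ 2 + t ^ 2)) • x' + b) (lam ^ 2 * t / (‖x'‖ ^ 2 + t ^ 2)) ≥ 0

theorem sqrt_mul_pow_div_rpow {n : ℕ} (hn : 2 ≤ n) {s A : ℝ} (hs : 0 ≤ s) (hA : 0 < A) :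
    √(s * A) ^ (n - 2) / A ^ (((n : ℝ) - 2) / 2) = s ^ (((n : ℝ) - 2) / 2) := by
  have hexp : (1 / 2 : ℝ) * ((n - 2 : ℕ) : ℝ) = ((n : ℝ) - 2) / 2 := by
    rw [Nat.cast_sub hn]; push_cast; ring
  rw [Real.sqrt_eq_rpow, ← Real.rpow_natCast, ← Real.rpow_mul (by positivity), hexp,
    Real.mul_rpow hs hA.le, mul_div_assoc, div_self (by positivity), mul_one]

section
variable {E : Type*} [NormedAddCommGroup E] [NormedSpace ℝ E] {n : ℕ} {f : E → ℝ → ℝ}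

theorem KelvinDominates.rpow_mul_le (hn : 2 ≤ n) (hK : KelvinDominates n f) (x' y' : E)
    {t s : ℝ} (ht : 0 < t) (hs : 1 < s) :
    s ^ (((n : ℝ) - 2) / 2) * f x' (s * t) ≤ f y' t := by
  set x : E := (s - 1)⁻¹ • (x' - y')
  set A := ‖x‖ ^ 2 + t ^ 2
  have hA : 0 < A := by positivity
  have hlam : √(s * A) ^ 2 = s * A := Real.sq_sqrt (by positivity)
  have hratio : √(s * A) ^ 2 / A = s := by rw [hlam, mul_div_assoc, div_self hA.ne', mul_one]
  have key := hK (y' - x) √(s * A) (by positivity) x t ht (by rw [hlam]; nlinarith)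
  have hy : x + (y' - x) = y' := by abel
  have hx : s • x + (y' - x) = x' := by
    have : s - 1 ≠ 0 := by linarith
    calc s • x + (y' - x) = y' + ((s - 1) * (s - 1)⁻¹) • (x' - y') := by
          simp only [x, mul_smul, sub_smul, one_smul]; abel
      _ = x' := by rw [mul_inv_cancel₀ this, one_smul]; abel
  rw [hratio, hy, hx, mul_div_right_comm, hratio, sqrt_mul_pow_div_rpow hn (by linarith) hA] at key
  linarith

theorem KelvinDominates.le (hn : 2 ≤ n) (hK : KelvinDominates n f) {x' : E} {t : ℝ}
    (hf : ContinuousWithinAt (f x') (Set.Ioi t) t) (y' : E) (ht : 0 < t) :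
    f x' t ≤ f y' t := by
  have hscale : Tendsto (· * t) (𝓝[>] 1) (𝓝[>] t) := by
    refine tendsto_nhdsWithin_iff.mpr ⟨?_, eventually_nhdsWithin_of_forall fun s hs => ?_⟩
    · exact ((continuous_mul_const t).tendsto' 1 t (one_mul t)).mono_left nhdsWithin_le_nhds
    · simpa using mul_lt_mul_of_pos_right (Set.mem_Ioi.mp hs) ht
  have hlim : Tendsto (fun s : ℝ => s ^ (((n : ℝ) - 2) / 2) * f x' (s * t)) (𝓝[>] 1)
      (𝓝 (f x' t)) := by
    simpa using ((Real.continuousAt_rpow_const 1 _ (Or.inl one_ne_zero)).tendsto.mono_left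
      nhdsWithin_le_nhds).mul (hf.tendsto.comp hscale)
  exact le_of_tendsto hlim (eventually_nhdsWithin_of_forall fun s hs =>
    hK.rpow_mul_le hn x' y' ht hs)

end

theorem stmt12 (n : ℕ) (hn : 3 ≤ n)
    (f : EuclideanSpace ℝ (Fin (n - 1)) → ℝ → ℝ)
    (hf : ContDiffOn ℝ 1 (fun z : EuclideanSpace ℝ (Fin (n - 1)) × ℝ => f z.1 z.2)
      {z : EuclideanSpace ℝ (Fin (n - 1)) × ℝ | 0 ≤ z.2})
    (hkelvin : ∀ (b : EuclideanSpace ℝ (Fin (n - 1))) (lam : ℝ), 0 < lam →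
      ∀ (x' : EuclideanSpace ℝ (Fin (n - 1))) (t : ℝ), 0 < t →
        ‖x'‖ ^ 2 + t ^ 2 < lam ^ 2 →
        f (x' + b) t
          - lam ^ (n - 2) / ((‖x'‖ ^ 2 + t ^ 2) ^ (((n : ℝ) - 2) / 2))
            * f ((lam ^ 2 / (‖x'‖ ^ 2 + t ^ 2)) • x' + b)
                (lam ^ 2 * t / (‖x'‖ ^ 2 + t ^ 2)) ≥ 0) :
    ∀ (x' : EuclideanSpace ℝ (Fin (n - 1))) (t : ℝ), 0 < t → f x' t = f 0 t := by
  have hK : KelvinDominates n f := hkelvin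
  have hcont : ∀ x' t, 0 < t → ContinuousWithinAt (f x') (Set.Ioi t) t := fun x' t ht =>
    have hmem : {z : EuclideanSpace ℝ (Fin (n - 1)) × ℝ | 0 ≤ z.2} ∈ 𝓝 (x', t) :=
      mem_of_superset ((isOpen_lt continuous_const continuous_snd).mem_nhds ht)
        fun _ h => (show (0 : ℝ) < _ from h).le
    ((hf.continuousOn.continuousAt hmem).comp (Continuous.prodMk_right x').continuousAt)
      |>.continuousWithinAt
  intro x' t ht
  have h2 : 2 ≤ n := by omega
  exact le_antisymm (hK.le h2 (hcont x' t ht) 0 ht) (hK.le h2 (hcont 0 t ht) x' ht)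
end
end

section
/- Let $p,q,a,b$ be reals with $p>1$, $q\geq 1$, $2q\neq p+1$, $n\geq 3$, and set $A=(2n(n-2)/(p+1))^{1/2}$, $c_+>0$, $B=(c_+^{-1}A)^{-(p-1)/(2q-p-1)}$. Then the function $u(t)=(\frac{p-1}{2}At+B)^{-2/(p-1)}$, viewed as a function on the upper half space depending only on the last coordinate, satisfies $\Delta u=n(n-2)u^p$ in $H$ and $\partial u/\partial t=-c_+u^q$ on $\partial H$. -/
/-!
Writing `u = ((p - 1)/2 · A t + B)^(-2/(p-1))`, the profile solves the first-order equation
`u' = -A u^((p+1)/2)`. Differentiating once more gives `u'' = (p+1)/2 · A² u^p`, and the choice of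
`A` makes `(p+1)/2 · A² = n(n-2)`. At `t = 0` the Neumann condition `-A u^((p+1)/2) = -c u^q` reduces
to `u(0)^(q-(p+1)/2) = A/c`, which is exactly how `B` is chosen.
-/

noncomputable section

open Topology

theorem lapH_of_forall_eq {m : ℕ} {u : EuclideanSpace ℝ (Fin m) → ℝ → ℝ} {f : ℝ → ℝ}
    (h : ∀ x t, u x t = f t) (x : EuclideanSpace ℝ (Fin m)) (t : ℝ) :
    lapH u x t = deriv (deriv f) t := by
  simp only [lapH, h, deriv_const', deriv_const, Finset.sum_const, smul_zero, zero_add]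

def profile (p A B t : ℝ) : ℝ := ((p - 1) / 2 * A * t + B) ^ (-(2 / (p - 1)))

section Profile

variable {p A B t : ℝ}

theorem profile_pos (ht : 0 < (p - 1) / 2 * A * t + B) : 0 < profile p A B t :=
  Real.rpow_pos_of_pos ht _

theorem hasDerivAt_profile (hp : p ≠ 1) (ht : 0 < (p - 1) / 2 * A * t + B) :
    HasDerivAt (profile p A B) (-A * profile p A B t ^ ((p + 1) / 2)) t := by
  have hlin : HasDerivAt (fun s => (p - 1) / 2 * A * s + B) ((p - 1) / 2 * A) t := by
    simpa using ((hasDerivAt_id t).const_mul ((p - 1) / 2 * A)).add_const B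
  refine (hlin.rpow_const (p := -(2 / (p - 1))) (Or.inl ht.ne')).congr_deriv ?_
  have hexp : -(2 / (p - 1)) * ((p + 1) / 2) = -(2 / (p - 1)) - 1 := by
    field_simp; ring
  rw [profile, ← Real.rpow_mul ht.le, hexp]
  field_simp

theorem deriv_deriv_profile (hp : p ≠ 1) (ht : 0 < (p - 1) / 2 * A * t + B) :
    deriv (deriv (profile p A B)) t = (p + 1) / 2 * A ^ 2 * profile p A B t ^ p := by
  have hpos : ∀ᶠ s in 𝓝 t, 0 < (p - 1) / 2 * A * s + B :=
    (continuous_const.mul continuous_id |>.add continuous_const).continuousAt.eventually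
      (lt_mem_nhds ht)
  have hderiv : deriv (profile p A B) =ᶠ[𝓝 t] fun s => -A * profile p A B s ^ ((p + 1) / 2) :=
    hpos.mono fun s hs => (hasDerivAt_profile hp hs).deriv
  have hu := profile_pos ht
  rw [hderiv.deriv_eq,
    (((hasDerivAt_profile hp ht).rpow_const (Or.inl hu.ne')).const_mul (-A)).deriv]
  have hsum : profile p A B t ^ ((p + 1) / 2) * profile p A B t ^ ((p + 1) / 2 - 1)
      = profile p A B t ^ p := by
    rw [← Real.rpow_add hu]; ring_nf
  linear_combination A ^ 2 * ((p + 1) / 2) * hsum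

theorem profile_zero_rpow_sub {q c : ℝ} (hp : p ≠ 1) (hne : 2 * q ≠ p + 1) (hAc : 0 ≤ c⁻¹ * A)
    (hB : B = (c⁻¹ * A) ^ (-((p - 1) / (2 * q - p - 1)))) :
    profile p A B 0 ^ (q - (p + 1) / 2) = c⁻¹ * A := by
  have hp1 : p - 1 ≠ 0 := sub_ne_zero.mpr hp
  have hne' : 2 * q - p - 1 ≠ 0 := fun h => hne (by linarith)
  have hexp : -((p - 1) / (2 * q - p - 1)) * -(2 / (p - 1)) * (q - (p + 1) / 2) = 1 := by
    field_simp; ring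
  rw [profile, mul_zero, zero_add, hB, ← Real.rpow_mul hAc, ← Real.rpow_mul (by positivity),
    hexp, Real.rpow_one]

end Profile

theorem stmt18_general (n : ℕ) (hn : 3 ≤ n) (p q c A B : ℝ)
    (hp : 1 < p) (hne : 2 * q ≠ p + 1) (hc : 0 < c)
    (hA : A = Real.sqrt (2 * n * ((n : ℝ) - 2) / (p + 1)))
    (hB : B = (c⁻¹ * A) ^ (-((p - 1) / (2 * q - p - 1))))
    (u : EuclideanSpace ℝ (Fin (n - 1)) → ℝ → ℝ)
    (hu : ∀ (x' : EuclideanSpace ℝ (Fin (n - 1))) (t : ℝ),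
      u x' t = ((p - 1) / 2 * A * t + B) ^ (-(2 / (p - 1)))) :
    (∀ (x' : EuclideanSpace ℝ (Fin (n - 1))) (t : ℝ), 0 < t →
        lapH u x' t = n * ((n : ℝ) - 2) * u x' t ^ p) ∧
    (∀ x' : EuclideanSpace ℝ (Fin (n - 1)),
        deriv (fun t => u x' t) 0 = -c * u x' 0 ^ q) := by
  have hn' : (3 : ℝ) ≤ n := by exact_mod_cast hn
  have hrad : 0 < 2 * n * ((n : ℝ) - 2) / (p + 1) := by
    apply div_pos <;> nlinarith
  have hApos : 0 < A := hA ▸ Real.sqrt_pos.mpr hrad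
  have hAc : 0 < c⁻¹ * A := mul_pos (inv_pos.mpr hc) hApos
  have hBpos : 0 < B := hB ▸ Real.rpow_pos_of_pos hAc _
  have hpos : ∀ t, 0 ≤ t → 0 < (p - 1) / 2 * A * t + B := fun t ht => by
    have : 0 < p - 1 := by linarith
    positivity
  have hprof : ∀ x' t, u x' t = profile p A B t := hu
  refine ⟨fun x' t ht => ?_, fun x' => ?_⟩
  · have hcoef : (p + 1) / 2 * A ^ 2 = n * ((n : ℝ) - 2) := by
      rw [hA, Real.sq_sqrt hrad.le]; field_simp
    rw [lapH_of_forall_eq hprof, deriv_deriv_profile hp.ne' (hpos t ht.le), hprof, hcoef]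
  · have hsplit : profile p A B 0 ^ q
        = profile p A B 0 ^ ((p + 1) / 2) * profile p A B 0 ^ (q - (p + 1) / 2) := by
      rw [← Real.rpow_add (profile_pos (hpos 0 le_rfl))]; ring_nf
    rw [funext (hprof x'), (hasDerivAt_profile hp.ne' (hpos 0 le_rfl)).deriv, hsplit,
      profile_zero_rpow_sub hp.ne' hne hAc.le hB]
    field_simp

theorem stmt18 (n : ℕ) (hn : 3 ≤ n) (p q c A B : ℝ)
    (hp : 1 < p) (hq : 1 ≤ q) (hne : 2 * q ≠ p + 1) (hc : 0 < c)
    (hA : A = Real.sqrt (2 * n * ((n : ℝ) - 2) / (p + 1)))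
    (hB : B = (c⁻¹ * A) ^ (-((p - 1) / (2 * q - p - 1))))
    (u : EuclideanSpace ℝ (Fin (n - 1)) → ℝ → ℝ)
    (hu : ∀ (x' : EuclideanSpace ℝ (Fin (n - 1))) (t : ℝ),
      u x' t = ((p - 1) / 2 * A * t + B) ^ (-(2 / (p - 1)))) :
    (∀ (x' : EuclideanSpace ℝ (Fin (n - 1))) (t : ℝ), 0 < t →
        lapH u x' t = n * ((n : ℝ) - 2) * u x' t ^ p) ∧
    (∀ x' : EuclideanSpace ℝ (Fin (n - 1)),
        deriv (fun t => u x' t) 0 = -c * u x' 0 ^ q) :=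
  stmt18_general n hn p q c A B hp hne hc hA hB u hu
end
end
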